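/- Let a, b ∈ S_n with ℓ(a) = ℓ(b) − 1, b = a·s_j for a simple transposition s_j with j + 1 > 2·m(a) and m(b) = j + 1 (so in particular m(b) > 2·m(a)), and a ≠ e. Then the right descent set of a is a subset of the right descent set of b. Contrapositively: if rds(a) \ rds(b) ≠ ∅ and ℓ(a) = ℓ(b) − 1 with a ≺ b, then m(b) ≤ 2·m(a). -/
import Mathlib


/-- The simple transposition `s_i = (i, i+1)` of the symmetric group on `{1, 2, 3, ...}`. -/
def sTr (i : ℕ) : Equiv.Perm ℕ := Equiv.swap i (i + 1)

/-- The Coxeter length of a permutation: its number of inversions. -/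
noncomputable def len (w : Equiv.Perm ℕ) : ℕ :=
  Set.ncard {p : ℕ × ℕ | p.1 < p.2 ∧ w p.2 < w p.1}

/-- The largest point moved by `w` (`0` if `w` is the identity). -/
noncomputable def mPt (w : Equiv.Perm ℕ) : ℕ := sSup {k | w k ≠ k}

/-- The right descent set of `w` (as a set of indices of simple transpositions). -/
noncomputable def rds (w : Equiv.Perm ℕ) : Set ℕ := {i | 1 ≤ i ∧ len (w * sTr i) < len w}

/-- The left descent set of `w`. -/
noncomputable def lds (w : Equiv.Perm ℕ) : Set ℕ := {i | 1 ≤ i ∧ len (sTr i * w) < len w}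

/-- The symmetric group `S_n`, realized as permutations of `ℕ` fixing `0` and every `k > n`. -/
def Sn (n : ℕ) : Set (Equiv.Perm ℕ) := {w | ∀ k, k = 0 ∨ n < k → w k = k}

/-- Bruhat order on the (infinite) symmetric group on `{1, 2, ...}`: generated by
multiplying by transpositions that increase the length. -/
noncomputable def bruhatLE : Equiv.Perm ℕ → Equiv.Perm ℕ → Prop :=
  Relation.ReflTransGen (fun a b =>
    (∃ i j, 1 ≤ i ∧ i < j ∧ b = a * Equiv.swap i j) ∧ len a < len b)

namespace KLStab

def Inv (w : Equiv.Perm ℕ) : Set (ℕ × ℕ) := {p : ℕ × ℕ | p.1 < p.2 ∧ w p.2 < w p.1}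

lemma len_eq (w : Equiv.Perm ℕ) : len w = (Inv w).ncard := rfl

lemma sTr_def (t : ℕ) : sTr t = Equiv.swap t (t + 1) := rfl

lemma inv_finite {w : Equiv.Perm ℕ} {N : ℕ} (h : ∀ k, N ≤ k → w k = k) :
    (Inv w).Finite := by
  apply Set.Finite.subset ((Set.finite_Iio N).prod (Set.finite_Iio N))
  rintro ⟨p, q⟩ ⟨hpq, hw⟩
  dsimp only at hpq hw
  simp only [Set.mem_prod, Set.mem_Iio]
  by_cases hq : q < N
  · exact ⟨hpq.trans hq, hq⟩
  · exfalso
    push_neg at hq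
    rw [h q hq] at hw
    have h1 : N ≤ w p := hq.trans hw.le
    have h3 : w (w p) = w p := h _ h1
    have h4 : w p = p := w.injective h3
    omega

lemma swap_lt {t p q : ℕ} (hpq : p < q) (hne : ¬(p = t ∧ q = t + 1)) :
    Equiv.swap t (t + 1) p < Equiv.swap t (t + 1) q := by
  simp only [Equiv.swap_apply_def]
  split_ifs <;> omega

lemma inv_mul_sTr {w : Equiv.Perm ℕ} {t : ℕ} (h : w t < w (t + 1)) :
    Inv (w * sTr t) =
      insert (t, t + 1)
        ((fun p : ℕ × ℕ => (Equiv.swap t (t + 1) p.1, Equiv.swap t (t + 1) p.2)) '' Inv w) := by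
  ext ⟨p, q⟩
  constructor
  · rintro ⟨hpq, hw⟩
    dsimp only at hpq hw
    by_cases he : p = t ∧ q = t + 1
    · rw [Set.mem_insert_iff]
      left
      rw [he.1, he.2]
    · rw [Set.mem_insert_iff]
      right
      refine ⟨(Equiv.swap t (t + 1) p, Equiv.swap t (t + 1) q), ⟨swap_lt hpq he, hw⟩, ?_⟩
      simp [Equiv.swap_apply_self]
  · intro hm
    rw [Set.mem_insert_iff] at hm
    rcases hm with heq | ⟨⟨p', q'⟩, ⟨hpq', hw'⟩, heq⟩
    · have hpt : p = t ∧ q = t + 1 := by simpa [Prod.ext_iff] using heq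
      refine ⟨?_, ?_⟩
      · show p < q
        omega
      · show w (Equiv.swap t (t + 1) q) < w (Equiv.swap t (t + 1) p)
        rw [hpt.1, hpt.2, Equiv.swap_apply_left, Equiv.swap_apply_right]
        exact h
    · dsimp only at hpq' hw' heq
      obtain ⟨h1, h2⟩ : Equiv.swap t (t + 1) p' = p ∧ Equiv.swap t (t + 1) q' = q := by
        simpa [Prod.ext_iff] using heq
      refine ⟨?_, ?_⟩
      · show p < q
        rw [← h1, ← h2]
        refine swap_lt hpq' ?_
        rintro ⟨rfl, rfl⟩
        exact absurd hw' (not_lt.2 h.le)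
      · show w (Equiv.swap t (t + 1) q) < w (Equiv.swap t (t + 1) p)
        rw [← h1, ← h2, Equiv.swap_apply_self, Equiv.swap_apply_self]
        exact hw'

lemma len_INC {w : Equiv.Perm ℕ} {t : ℕ} (hfin : (Inv w).Finite) (h : w t < w (t + 1)) :
    len (w * sTr t) = len w + 1 := by
  classical
  have hinj : Function.Injective
      (fun p : ℕ × ℕ => (Equiv.swap t (t + 1) p.1, Equiv.swap t (t + 1) p.2)) := by
    rintro ⟨a1, a2⟩ ⟨b1, b2⟩ hab
    simp only [Prod.mk.injEq] at hab ⊢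
    exact ⟨(Equiv.swap t (t+1)).injective hab.1, (Equiv.swap t (t+1)).injective hab.2⟩
  have hnm : (t, t + 1) ∉
      (fun p : ℕ × ℕ => (Equiv.swap t (t + 1) p.1, Equiv.swap t (t + 1) p.2)) '' Inv w := by
    rintro ⟨⟨p', q'⟩, ⟨hpq', -⟩, heq⟩
    simp only [Prod.mk.injEq] at heq
    have h1 : p' = t + 1 :=
      (Equiv.swap t (t+1)).injective (heq.1.trans (Equiv.swap_apply_right t (t+1)).symm)
    have h2 : q' = t :=
      (Equiv.swap t (t+1)).injective (heq.2.trans (Equiv.swap_apply_left t (t+1)).symm)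
    omega
  rw [len_eq, len_eq, inv_mul_sTr h,
    Set.ncard_insert_of_notMem hnm (hfin.image _),
    Set.ncard_image_of_injective _ hinj]

lemma descent_of_len_lt {w : Equiv.Perm ℕ} {t : ℕ} (hfin : (Inv w).Finite)
    (hlt : len (w * sTr t) < len w) : w (t + 1) < w t := by
  rcases lt_trichotomy (w t) (w (t + 1)) with h | h | h
  · rw [len_INC hfin h] at hlt; omega
  · exact absurd (w.injective h) (by omega)
  · exact h

lemma ascent_of_not_lt {w : Equiv.Perm ℕ} {t : ℕ} (hfin : (Inv (w * sTr t)).Finite)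
    (hge : ¬ len (w * sTr t) < len w) : w t < w (t + 1) := by
  rcases lt_trichotomy (w t) (w (t + 1)) with h | h | h
  · exact h
  · exact absurd (w.injective h) (by omega)
  · exfalso
    have hkey : (w * sTr t) t < (w * sTr t) (t + 1) := by
      show w (sTr t t) < w (sTr t (t+1))
      rw [sTr_def, Equiv.swap_apply_left, Equiv.swap_apply_right]
      exact h
    have h2 := len_INC hfin hkey
    rw [mul_assoc, show sTr t * sTr t = 1 from Equiv.swap_mul_self t (t + 1), mul_one] at h2
    omega

lemma moved_bdd {n : ℕ} {w : Equiv.Perm ℕ} (hw : w ∈ Sn n) : BddAbove {k | w k ≠ k} := by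
  refine ⟨n, fun k hk => ?_⟩
  by_contra hc
  push_neg at hc
  exact hk (hw k (Or.inr hc))

lemma fix_of_gt {n : ℕ} {w : Equiv.Perm ℕ} (hw : w ∈ Sn n) {k : ℕ} (hk : mPt w < k) :
    w k = k := by
  by_contra hc
  exact absurd (le_csSup (moved_bdd hw) hc) (not_le.2 hk)

lemma mapsto {n : ℕ} {w : Equiv.Perm ℕ} (hw : w ∈ Sn n) {k : ℕ} (hk : k ≤ mPt w) :
    w k ≤ mPt w := by
  by_contra hc
  push_neg at hc
  have h1 : w (w k) = w k := fix_of_gt hw hc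
  have h2 : w k = k := w.injective h1
  omega

lemma mPt_le {w : Equiv.Perm ℕ} {M : ℕ} (h : ∀ k, M < k → w k = k) : mPt w ≤ M :=
  csSup_le' fun k hk => by
    by_contra hc
    push_neg at hc
    exact hk (h k hc)

lemma two_le_mPt {n : ℕ} {w : Equiv.Perm ℕ} (hw : w ∈ Sn n) (hne : w ≠ 1) : 2 ≤ mPt w := by
  by_contra hc
  push_neg at hc
  apply hne
  have h0 : w 0 = 0 := hw 0 (Or.inl rfl)
  have h2 : ∀ k, 2 ≤ k → w k = k := fun k hk => fix_of_gt hw (lt_of_lt_of_le hc hk)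
  have h1 : w 1 = 1 := by
    by_contra hx
    rcases Nat.lt_or_ge (w 1) 2 with h | h
    · have h01 : w 1 = 0 := by omega
      have := w.injective (h01.trans h0.symm)
      omega
    · have := w.injective (h2 (w 1) h)
      omega
  ext k
  match k with
  | 0 => simpa using h0
  | 1 => simpa using h1
  | (k+2) => simpa using h2 (k+2) (by omega)

lemma sTr_comm {t u : ℕ} (h : t + 2 ≤ u) : sTr t * sTr u = sTr u * sTr t := by
  ext k
  simp only [sTr, Equiv.Perm.mul_apply, Equiv.swap_apply_def]
  split_ifs <;> omega

lemma len_one : len (1 : Equiv.Perm ℕ) = 0 := by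
  rw [len_eq]
  convert Set.ncard_empty (ℕ × ℕ)
  rw [Set.eq_empty_iff_forall_notMem]
  rintro ⟨p, q⟩ ⟨h1, h2⟩
  simp only [Equiv.Perm.one_apply] at h2
  omega

lemma rds_sub {n j : ℕ} {a : Equiv.Perm ℕ} (ha : a ∈ Sn n) (hj : 2 * mPt a ≤ j) :
    rds a ⊆ rds (a * sTr j) := by
  intro t ht
  obtain ⟨ht1, htlen⟩ := ht
  have hfixa : ∀ k, mPt a < k → a k = k := fun k hk => fix_of_gt ha hk
  have hfina : (Inv a).Finite := inv_finite (N := mPt a + 1) (fun k hk => hfixa k (by omega))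
  have hdesc : a (t + 1) < a t := descent_of_len_lt hfina htlen
  have htm : t < mPt a := by
    by_contra hc
    push_neg at hc
    rcases eq_or_lt_of_le hc with heq | hlt
    · have h1 : a (t + 1) = t + 1 := hfixa _ (by omega)
      have h2 : a t ≤ mPt a := mapsto ha heq.ge
      omega
    · have h1 : a (t + 1) = t + 1 := hfixa _ (by omega)
      have h2 : a t = t := hfixa _ hlt
      omega
  have ht2 : t + 2 ≤ j := by omega
  have hw : ∀ k, mPt a + 1 ≤ k → (a * sTr t) k = k := by
    intro k hk
    show a (sTr t k) = k
    rw [sTr_def, Equiv.swap_apply_of_ne_of_ne (by omega) (by omega)]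
    exact hfixa k (by omega)
  have hfinw : (Inv (a * sTr t)).Finite := inv_finite hw
  have hkey : (a * sTr t) j < (a * sTr t) (j + 1) := by
    rw [hw j (by omega), hw (j + 1) (by omega)]
    omega
  have hstep := len_INC hfinw hkey
  have hcomm : a * sTr j * sTr t = a * sTr t * sTr j := by
    rw [mul_assoc, mul_assoc, sTr_comm ht2]
  have hbj : len (a * sTr j) = len a + 1 := by
    apply len_INC hfina
    rw [hfixa j (by omega), hfixa (j + 1) (by omega)]
    omega
  refine ⟨ht1, ?_⟩
  rw [hcomm, hstep, hbj]
  omega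

lemma len_le_of_bruhat {a b : Equiv.Perm ℕ} (h : bruhatLE a b) : len a ≤ len b := by
  have h' : Relation.ReflTransGen (fun a b =>
      (∃ i j, 1 ≤ i ∧ i < j ∧ b = a * Equiv.swap i j) ∧ len a < len b) a b := h
  clear h
  induction h' with
  | refl => exact le_refl _
  | tail _ hstep ih => exact ih.trans hstep.2.le

lemma cover_step {a b : Equiv.Perm ℕ} (h : bruhatLE a b) (hlen : len b = len a + 1) :
    ∃ i j, 1 ≤ i ∧ i < j ∧ b = a * Equiv.swap i j := by
  have h' : Relation.ReflTransGen (fun a b =>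
      (∃ i j, 1 ≤ i ∧ i < j ∧ b = a * Equiv.swap i j) ∧ len a < len b) a b := h
  rcases Relation.ReflTransGen.cases_head h' with rfl | ⟨c, hac, hcb⟩
  · omega
  · have hcb' : len c ≤ len b := len_le_of_bruhat hcb
    have h1 : len a < len c := hac.2
    have hc : c = b := by
      rcases Relation.ReflTransGen.cases_head hcb with rfl | ⟨d, hcd, hdb⟩
      · rfl
      · have := hcd.2
        have := len_le_of_bruhat hdb
        omega
    subst hc
    exact hac.1

end KLStab

/-- Covering case of the stability lemma for the Kazhdan–Lusztig `μ`-function.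
(1) If `a ≠ e`, `b = a·s_j` with `ℓ(b) = ℓ(a) + 1`, `j + 1 > 2·m(a)` and `m(b) = j + 1`,
then `rds(a) ⊆ rds(b)`.
(2) Contrapositively: if `a ≺ b`, `ℓ(a) = ℓ(b) - 1` and `rds(a) \ rds(b) ≠ ∅`, then
`m(b) ≤ 2·m(a)`. -/
theorem stability_cover_case (n : ℕ) :
    (∀ a j, a ∈ Sn n → a ≠ 1 → 1 ≤ j →
      len (a * sTr j) = len a + 1 → 2 * mPt a < j + 1 → mPt (a * sTr j) = j + 1 →
      rds a ⊆ rds (a * sTr j)) ∧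
    (∀ a b, a ∈ Sn n → b ∈ Sn n → bruhatLE a b → len b = len a + 1 →
      (rds a \ rds b).Nonempty → mPt b ≤ 2 * mPt a) := by
  constructor
  · intro a j ha _ _ _ hj2 _
    exact KLStab.rds_sub ha (by omega)
  · intro a b ha hb hab hlen hne
    obtain ⟨t, htA, htB⟩ := hne
    obtain ⟨ht1, htlen⟩ := htA
    by_contra hm
    push_neg at hm
    have hane : a ≠ 1 := by
      rintro rfl
      rw [KLStab.len_one] at htlen
      omega
    have h2m : 2 ≤ mPt a := KLStab.two_le_mPt ha hane
    obtain ⟨i, j, hi1, hij, hbe⟩ := KLStab.cover_step hab hlen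
    have hfixa : ∀ k, mPt a < k → a k = k := fun k hk => KLStab.fix_of_gt ha hk
    have hmapa : ∀ k, k ≤ mPt a → a k ≤ mPt a := fun k hk => KLStab.mapsto ha hk
    have hfina : (KLStab.Inv a).Finite :=
      KLStab.inv_finite (N := mPt a + 1) fun k hk => hfixa k (by omega)
    have hbfix : ∀ k, max (mPt a) j < k → b k = k := by
      intro k hk
      have hmk : mPt a < k := lt_of_le_of_lt (le_max_left _ _) hk
      have hjk : j < k := lt_of_le_of_lt (le_max_right _ _) hk
      rw [hbe]
      show a (Equiv.swap i j k) = k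
      rw [Equiv.swap_apply_of_ne_of_ne (by omega) (by omega)]
      exact hfixa k hmk
    have hmb : mPt b ≤ max (mPt a) j := KLStab.mPt_le hbfix
    have hjm : 2 * mPt a < j := by
      have h := lt_of_lt_of_le hm hmb
      rcases le_or_gt j (mPt a) with hj' | hj'
      · rw [Nat.max_eq_left hj'] at h
        omega
      · rw [Nat.max_eq_right hj'.le] at h
        exact h
    have hdesc : a (t + 1) < a t := KLStab.descent_of_len_lt hfina htlen
    have htm : t < mPt a := by
      by_contra hc
      push_neg at hc
      rcases eq_or_lt_of_le hc with heq | hlt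
      · have h1 : a (t + 1) = t + 1 := hfixa _ (by omega)
        have h2 : a t ≤ mPt a := hmapa t heq.ge
        omega
      · have h1 : a (t + 1) = t + 1 := hfixa _ (by omega)
        have h2 : a t = t := hfixa _ hlt
        omega
    have hbsfin : (KLStab.Inv (b * sTr t)).Finite := by
      apply KLStab.inv_finite (N := max (mPt a) j + t + 2)
      intro k hk
      have hk' : max (mPt a) j < k := by omega
      show b (sTr t k) = k
      rw [KLStab.sTr_def, Equiv.swap_apply_of_ne_of_ne (by omega) (by omega)]
      exact hbfix k hk'
    have hasc : b t < b (t + 1) :=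
      KLStab.ascent_of_not_lt hbsfin (fun hc => htB ⟨ht1, hc⟩)
    have hbapp : ∀ k, k ≠ i → k ≠ j → b k = a k := by
      intro k h1 h2
      rw [hbe]
      show a (Equiv.swap i j k) = a k
      rw [Equiv.swap_apply_of_ne_of_ne h1 h2]
    have haj : a j = j := hfixa j (by omega)
    have hbi : b i = j := by
      rw [hbe]
      show a (Equiv.swap i j i) = j
      rw [Equiv.swap_apply_left, haj]
    have hbjv : b j = a i := by
      rw [hbe]
      show a (Equiv.swap i j j) = a i
      rw [Equiv.swap_apply_right]
    have hit : i = t ∨ i = t + 1 := by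
      by_contra hc
      push_neg at hc
      have h1 : b t = a t := hbapp t (fun h => hc.1 h.symm) (by omega)
      have h2 : b (t + 1) = a (t + 1) := hbapp (t + 1) (fun h => hc.2 h.symm) (by omega)
      omega
    rcases hit with heq | heq
    · -- i = t
      have hbt : b t = j := by rw [← heq]; exact hbi
      have h2 : b (t + 1) = a (t + 1) := hbapp (t + 1) (by omega) (by omega)
      have h3 : a (t + 1) ≤ mPt a := hmapa _ (by omega)
      omega
    · -- i = t + 1
      subst heq
      have hbt1 : b (t + 1) = j := hbi
      have hat1 : a (t + 1) ≤ mPt a := hmapa _ (by omega)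
      have noJa : ∀ p : ℕ × ℕ, p ∈ KLStab.Inv a → p.1 ≠ j ∧ p.2 ≠ j := by
        rintro ⟨p, q⟩ ⟨hpq, hw⟩
        dsimp only at hpq hw ⊢
        constructor
        · rintro rfl
          have h1 : a q = q := hfixa q (by omega)
          rw [haj] at hw
          omega
        · rintro rfl
          rw [haj] at hw
          have h1 : a p ≤ mPt a ∨ a p = p := by
            rcases le_or_gt p (mPt a) with h | h
            · exact Or.inl (hmapa p h)
            · exact Or.inr (hfixa p h)
          omega
      classical
      set m := mPt a with hmdef
      set F : ℕ × ℕ → ℕ × ℕ := fun p => if p.2 = t + 1 then (p.1, j) else p with hF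
      have hFap : ∀ p q : ℕ, F (p, q) = if q = t + 1 then (p, j) else (p, q) := fun p q => rfl
      have hTfin : (KLStab.Inv b).Finite :=
        KLStab.inv_finite (N := max m j + 1) fun k hk => hbfix k (by omega)
      have hFS : ∀ p ∈ KLStab.Inv a, F p ∈ KLStab.Inv b := by
        rintro ⟨p, q⟩ ⟨hpq, hw⟩
        dsimp only at hpq hw
        by_cases hq : q = t + 1
        · rw [hFap, if_pos hq]
          refine ⟨?_, ?_⟩
          · show p < j
            omega
          · show b j < b p
            have hbp : b p = a p := hbapp p (by omega) (by omega)
            rw [hbjv, hbp]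
            rw [hq] at hw
            exact hw
        · rw [hFap, if_neg hq]
          have hqj : q ≠ j := (noJa (p, q) ⟨hpq, hw⟩).2
          have hq2 : b q = a q := hbapp q hq hqj
          refine ⟨hpq, ?_⟩
          by_cases hp : p = t + 1
          · show b q < b p
            rw [hp, hbt1, hq2]
            have : a q < a (t + 1) := by rw [← hp]; exact hw
            omega
          · have hpj : p ≠ j := (noJa (p, q) ⟨hpq, hw⟩).1
            have hp2 : b p = a p := hbapp p hp hpj
            show b q < b p
            rw [hp2, hq2]
            exact hw
      have hinj : Set.InjOn F (KLStab.Inv a) := by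
        rintro ⟨p1, q1⟩ h1 ⟨p2, q2⟩ h2 heq
        rw [hFap, hFap] at heq
        by_cases ha1 : q1 = t + 1 <;> by_cases ha2 : q2 = t + 1
        · rw [if_pos ha1, if_pos ha2] at heq
          simp only [Prod.mk.injEq] at heq ⊢
          exact ⟨heq.1, ha1.trans ha2.symm⟩
        · rw [if_pos ha1, if_neg ha2] at heq
          exfalso
          have : q2 = j := by
            simp only [Prod.mk.injEq] at heq
            exact heq.2.symm
          exact (noJa (p2, q2) h2).2 this
        · rw [if_neg ha1, if_pos ha2] at heq
          exfalso
          have : q1 = j := by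
            simp only [Prod.mk.injEq] at heq
            exact heq.2
          exact (noJa (p1, q1) h1).2 this
        · rw [if_neg ha1, if_neg ha2] at heq
          exact heq
      have hx1 : ((t + 1, m + 1) : ℕ × ℕ) ∈ KLStab.Inv b := by
        refine ⟨?_, ?_⟩
        · show t + 1 < m + 1
          omega
        · show b (m + 1) < b (t + 1)
          have h1 : b (m + 1) = a (m + 1) := hbapp _ (by omega) (by omega)
          rw [h1, hfixa (m + 1) (by omega), hbt1]
          omega
      have hx2 : ((t + 1, m + 2) : ℕ × ℕ) ∈ KLStab.Inv b := by
        refine ⟨?_, ?_⟩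
        · show t + 1 < m + 2
          omega
        · show b (m + 2) < b (t + 1)
          have h1 : b (m + 2) = a (m + 2) := hbapp _ (by omega) (by omega)
          rw [h1, hfixa (m + 2) (by omega), hbt1]
          omega
      have hnx : ∀ r : ℕ, r = m + 1 ∨ r = m + 2 →
          ((t + 1, r) : ℕ × ℕ) ∉ F '' KLStab.Inv a := by
        rintro r hr ⟨⟨p, q⟩, hpq, heq⟩
        rw [hFap] at heq
        by_cases hq : q = t + 1
        · rw [if_pos hq] at heq
          simp only [Prod.mk.injEq] at heq
          omega
        · rw [if_neg hq] at heq
          simp only [Prod.mk.injEq] at heq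
          obtain ⟨hlt', hw'⟩ := hpq
          dsimp only at hlt' hw'
          rw [heq.1, heq.2] at hw'
          have h1 : a r = r := hfixa r (by omega)
          omega
      have himg : insert ((t + 1, m + 1) : ℕ × ℕ)
          (insert ((t + 1, m + 2) : ℕ × ℕ) (F '' KLStab.Inv a)) ⊆ KLStab.Inv b := by
        intro x hx
        simp only [Set.mem_insert_iff] at hx
        rcases hx with rfl | rfl | hx
        · exact hx1
        · exact hx2
        · obtain ⟨p, hp, rfl⟩ := hx
          exact hFS p hp
      have hfin1 : (F '' KLStab.Inv a).Finite := hfina.image F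
      have hcard1 : (F '' KLStab.Inv a).ncard = (KLStab.Inv a).ncard :=
        Set.ncard_image_of_injOn hinj
      have hcard2 := Set.ncard_insert_of_notMem (hnx (m + 2) (Or.inr rfl)) hfin1
      have hne12 : ((t + 1, m + 1) : ℕ × ℕ) ∉
          insert ((t + 1, m + 2) : ℕ × ℕ) (F '' KLStab.Inv a) := by
        intro h
        simp only [Set.mem_insert_iff] at h
        rcases h with h | h
        · simp only [Prod.mk.injEq] at h
          omega
        · exact hnx (m + 1) (Or.inl rfl) h
      have hcard3 := Set.ncard_insert_of_notMem hne12 (hfin1.insert _)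
      have hle := Set.ncard_le_ncard himg hTfin
      rw [KLStab.len_eq, KLStab.len_eq] at hlen
      omega
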